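/- A symmetric tensor A of order m and dimension n is strictly copositive if and only if no principal sub-tensor of A has a non-positive Z^{++}-eigenvalue, i.e., no principal sub-tensor B admits λ ≤ 0 and a strictly positive vector v with v^T v = 1 and B v^{m-1} = λ v. -/

import Mathlib

/-!
Strict copositivity fails exactly when `A x^m ≤ 0` somewhere on the compact set of nonnegative
unit vectors, i.e. when the minimum `λ` of `A x^m` there is nonpositive. At a minimiser `x`, each
coordinate in the support `S` of `x` can be perturbed in both directions without leaving the
nonnegative orthant, so the Lagrange condition holds on `S`: by symmetry of `A` the derivative of
`A x^m` in direction `e_i` is `m (A x^{m-1})_i`, written `tcontr hm A univ x i` below, and the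
constraint contributes `m λ x_i`. As `x` vanishes off `S`, `(A x^{m-1})_i` is the contraction of
the principal sub-tensor on `S`, so `(λ, x)` is a nonpositive `Z⁺⁺`-eigenpair of it. Conversely
such an eigenpair `(λ, v)` on `S`, extended by zero, gives `A v^m = λ ∑ v_i^2 = λ ≤ 0`.
-/

open Finset

/-- `A x^m` for an `m`-order `n`-dimensional tensor `A`. -/
noncomputable def tpow {m n : ℕ} (A : (Fin m → Fin n) → ℝ) (x : Fin n → ℝ) : ℝ :=
  ∑ f : Fin m → Fin n, A f * ∏ k, x (f k)

/-- `A` is symmetric: entries invariant under permutations of indices. -/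
def SymT {m n : ℕ} (A : (Fin m → Fin n) → ℝ) : Prop :=
  ∀ (σ : Equiv.Perm (Fin m)) (f : Fin m → Fin n), A (f ∘ σ) = A f

/-- `A` is copositive. -/
def CoposT {m n : ℕ} (A : (Fin m → Fin n) → ℝ) : Prop :=
  ∀ x : Fin n → ℝ, (∀ i, 0 ≤ x i) → 0 ≤ tpow A x

/-- `A` is strictly copositive. -/
def StrictCoposT {m n : ℕ} (A : (Fin m → Fin n) → ℝ) : Prop :=
  ∀ x : Fin n → ℝ, (∀ i, 0 ≤ x i) → x ≠ 0 → 0 < tpow A x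

/-- `(A_S x^{m-1})_i` : the `i`-th component of the contraction of the principal
sub-tensor of `A` on the index set `S` with `x` taken `m-1` times. -/
noncomputable def tcontr {m n : ℕ} (hm : 0 < m) (A : (Fin m → Fin n) → ℝ)
    (S : Finset (Fin n)) (x : Fin n → ℝ) (i : Fin n) : ℝ :=
  ∑ f ∈ Finset.univ.filter
      (fun f : Fin m → Fin n => f ⟨0, hm⟩ = i ∧ ∀ k, f k ∈ S),
    A f * ∏ k ∈ Finset.univ.erase (⟨0, hm⟩ : Fin m), x (f k)

section

variable {m n : ℕ} (A : (Fin m → Fin n) → ℝ)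

theorem tpow_smul (c : ℝ) (x : Fin n → ℝ) : tpow A (c • x) = c ^ m * tpow A x := by
  simp only [tpow, mul_sum, Pi.smul_apply, smul_eq_mul, prod_mul_distrib, prod_const, card_univ,
    Fintype.card_fin]
  exact sum_congr rfl fun f _ => by ring

theorem continuous_tpow : Continuous (tpow A) :=
  continuous_finsetSum _ fun _ _ => continuous_const.mul <| continuous_finsetProd _ fun _ _ =>
    continuous_apply _

variable (hm : 0 < m)

theorem tcontr_univ (x : Fin n → ℝ) (i : Fin n) :
    tcontr hm A univ x i =
      ∑ f with f ⟨0, hm⟩ = i, A f * ∏ k ∈ univ.erase ⟨0, hm⟩, x (f k) := by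
  simp [tcontr]

theorem tpow_eq_sum_mul_tcontr {S : Finset (Fin n)} {x : Fin n → ℝ} (hx : ∀ j ∉ S, x j = 0) :
    tpow A x = ∑ i ∈ S, x i * tcontr hm A S x i := by
  classical
  have hsupp : tpow A x = ∑ f with ∀ k, f k ∈ S, A f * ∏ k, x (f k) := by
    refine (sum_subset (filter_subset _ _) fun f _ hf => ?_).symm
    obtain ⟨k, hk⟩ := by simpa using hf
    rw [prod_eq_zero (mem_univ k) (hx _ hk), mul_zero]
  rw [hsupp, ← sum_fiberwise_of_maps_to (s := {f : Fin m → Fin n | ∀ k, f k ∈ S}) (t := S)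
    (g := fun f => f ⟨0, hm⟩) fun f hf => (mem_filter.1 hf).2 _]
  refine sum_congr rfl fun i _ => ?_
  rw [filter_filter, tcontr, mul_sum]
  refine sum_congr (filter_congr fun _ _ => and_comm) fun f hf => ?_
  rw [← mul_prod_erase univ _ (mem_univ _), (mem_filter.1 hf).2.1]
  ring

theorem tcontr_congr {S : Finset (Fin n)} {x y : Fin n → ℝ} (h : ∀ j ∈ S, x j = y j) (i : Fin n) :
    tcontr hm A S x i = tcontr hm A S y i :=
  sum_congr rfl fun f hf => by
    simp only [mem_filter] at hf
    exact congrArg _ (prod_congr rfl fun k _ => h _ (hf.2.2 k))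

theorem tcontr_eq_tcontr_univ {S : Finset (Fin n)} {x : Fin n → ℝ} (hx : ∀ j ∉ S, x j = 0)
    {i : Fin n} (hi : i ∈ S) : tcontr hm A S x i = tcontr hm A univ x i := by
  rw [tcontr_univ]
  refine sum_subset (fun f hf => by simp_all) fun f hf hf' => ?_
  simp only [mem_filter, mem_univ, true_and, not_and, not_forall] at hf hf'
  obtain ⟨k, hk⟩ := hf' hf
  have hk0 : k ≠ ⟨0, hm⟩ := by rintro rfl; exact hk (hf ▸ hi)
  rw [prod_eq_zero (mem_erase.2 ⟨hk0, mem_univ k⟩) (hx _ hk), mul_zero]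

end

section

variable {m n : ℕ} (hm : 0 < m) {A : (Fin m → Fin n) → ℝ}

theorem SymT.sum_prod_erase_eq_tcontr_univ (hA : SymT A) (x : Fin n → ℝ) (i : Fin n)
    (k : Fin m) :
    ∑ f with f k = i, A f * ∏ l ∈ univ.erase k, x (f l) = tcontr hm A univ x i := by
  classical
  set σ := Equiv.swap (⟨0, hm⟩ : Fin m) k
  have hσ : (univ.erase ⟨0, hm⟩).image σ = univ.erase k := by
    rw [image_erase σ.injective, image_univ_equiv, Equiv.swap_apply_left]
  rw [tcontr_univ]
  refine sum_nbij' (· ∘ σ) (· ∘ σ) (by simp [σ]) (by simp [σ]) (fun f _ => by ext; simp [σ])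
    (fun f _ => by ext; simp [σ]) fun f _ => ?_
  rw [hA σ f, ← hσ, prod_image fun a _ b _ hab => σ.injective hab]
  rfl

theorem SymT.hasDerivAt_tpow_add_smul (hA : SymT A) (x y : Fin n → ℝ) :
    HasDerivAt (fun t : ℝ => tpow A (x + t • y)) (m * ∑ i, y i * tcontr hm A univ x i) 0 := by
  classical
  have hfactor (f : Fin m → Fin n) (k : Fin m) :
      HasDerivAt (fun t : ℝ => x (f k) + t * y (f k)) (y (f k)) 0 := by
    simpa using ((hasDerivAt_id (0 : ℝ)).mul_const (y (f k))).const_add (x (f k))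
  have hslot (k : Fin m) :
      ∑ f, A f * ((∏ l ∈ univ.erase k, x (f l)) * y (f k)) = ∑ i, y i * tcontr hm A univ x i := by
    rw [← sum_fiberwise univ (· k)]
    refine sum_congr rfl fun i _ => ?_
    rw [← hA.sum_prod_erase_eq_tcontr_univ hm x i k, mul_sum]
    exact sum_congr rfl fun f hf => by rw [(mem_filter.1 hf).2]; ring
  have hline : (fun t : ℝ => tpow A (x + t • y)) =
      fun t => ∑ f, A f * ∏ k, (x (f k) + t * y (f k)) := by
    ext; simp [tpow]
  rw [hline]
  refine (HasDerivAt.fun_sum (u := univ) fun f _ =>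
    (HasDerivAt.fun_finsetProd (u := univ) fun k _ => hfactor f k).const_mul (A f)).congr_deriv ?_
  simp only [zero_mul, add_zero, smul_eq_mul, mul_sum]
  rw [sum_comm, sum_congr rfl fun k _ => hslot k]
  simp [mul_sum]

end

theorem hasDerivAt_sqrt_quadratic_pow (c : ℝ) (m : ℕ) :
    HasDerivAt (fun t : ℝ => √(1 + 2 * c * t + t ^ 2) ^ m) (m * c) 0 := by
  have hq : HasDerivAt (fun t : ℝ => 1 + 2 * c * t + t ^ 2) (2 * c) 0 := by
    simpa using (((hasDerivAt_id (0 : ℝ)).const_mul (2 * c)).const_add 1).fun_add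
      (hasDerivAt_pow 2 0)
  refine ((hq.sqrt (by norm_num)).fun_pow m).congr_deriv ?_
  simp

def nonnegUnitSphere (n : ℕ) : Set (Fin n → ℝ) := {y | (∀ j, 0 ≤ y j) ∧ ∑ j, y j ^ 2 = 1}

theorem isCompact_nonnegUnitSphere (n : ℕ) : IsCompact (nonnegUnitSphere n) := by
  refine Metric.isCompact_of_isClosed_isBounded ?_ ?_
  · exact (isClosed_le continuous_const continuous_id).inter
      (isClosed_eq (continuous_finsetSum _ fun j _ => (continuous_apply j).pow 2) continuous_const)
  · refine Metric.isBounded_closedBall (x := 0) (r := 1) |>.subset fun y hy => ?_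
    rw [mem_closedBall_zero_iff, pi_norm_le_iff_of_nonneg zero_le_one]
    intro j
    rw [Real.norm_eq_abs, ← sq_le_one_iff_abs_le_one, ← hy.2]
    exact single_le_sum (f := fun j => y j ^ 2) (fun j _ => sq_nonneg _) (mem_univ j)

section

variable {n : ℕ}

theorem sum_sq_pos_of_ne_zero {y : Fin n → ℝ} (hy : y ≠ 0) : 0 < ∑ j, y j ^ 2 := by
  obtain ⟨j, hj⟩ := Function.ne_iff.1 hy
  exact sum_pos' (fun j _ => sq_nonneg _) ⟨j, mem_univ j, sq_pos_of_ne_zero hj⟩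

theorem inv_sqrt_smul_mem_nonnegUnitSphere {y : Fin n → ℝ} (hy : ∀ j, 0 ≤ y j) (hy0 : y ≠ 0) :
    (√(∑ j, y j ^ 2))⁻¹ • y ∈ nonnegUnitSphere n := by
  have hpos := sum_sq_pos_of_ne_zero hy0
  refine ⟨fun j => mul_nonneg (by positivity) (hy j), ?_⟩
  simp only [Pi.smul_apply, smul_eq_mul, mul_pow, ← mul_sum, inv_pow, Real.sq_sqrt hpos.le]
  exact inv_mul_cancel₀ hpos.ne'

end

section

variable {m n : ℕ} (hm : 0 < m) {A : (Fin m → Fin n) → ℝ}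

theorem IsMinOn.mul_sqrt_pow_le_tpow {x : Fin n → ℝ}
    (hx : IsMinOn (tpow A) (nonnegUnitSphere n) x) {y : Fin n → ℝ} (hy : ∀ j, 0 ≤ y j)
    (hy0 : y ≠ 0) : tpow A x * √(∑ j, y j ^ 2) ^ m ≤ tpow A y := by
  have hc : 0 < √(∑ j, y j ^ 2) := Real.sqrt_pos.2 (sum_sq_pos_of_ne_zero hy0)
  have := isMinOn_iff.1 hx _ (inv_sqrt_smul_mem_nonnegUnitSphere hy hy0)
  rwa [tpow_smul, inv_pow, inv_mul_eq_div, le_div_iff₀ (pow_pos hc m)] at this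

theorem SymT.tcontr_univ_eq_of_isMinOn (hA : SymT A) {x : Fin n → ℝ}
    (hxK : x ∈ nonnegUnitSphere n) (hx : IsMinOn (tpow A) (nonnegUnitSphere n) x)
    {i : Fin n} (hi : 0 < x i) : tcontr hm A univ x i = tpow A x * x i := by
  classical
  set e : Fin n → ℝ := Pi.single i 1
  have hsq (t : ℝ) : ∑ j, (x + t • e) j ^ 2 = 1 + 2 * x i * t + t ^ 2 := by
    simp [e, add_sq, sum_add_distrib, hxK.2, Pi.single_apply]
  have hlocal : IsLocalMin
      (fun t => tpow A (x + t • e) - tpow A x * √(1 + 2 * x i * t + t ^ 2) ^ m) 0 := by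
    filter_upwards [Ioi_mem_nhds (neg_lt_zero.2 hi)] with t (ht : -x i < t)
    have hy (j : Fin n) : 0 ≤ (x + t • e) j := by
      by_cases hj : j = i
      · subst hj; simp [e]; linarith
      · simp [e, hj, hxK.1 j]
    have hy0 : x + t • e ≠ 0 := fun h => by
      have := congrFun h i
      simp [e] at this
      linarith
    have := hx.mul_sqrt_pow_le_tpow hy hy0
    rw [hsq] at this
    simp
    linarith
  have hderiv := (hA.hasDerivAt_tpow_add_smul hm x e).sub
    ((hasDerivAt_sqrt_quadratic_pow (x i) m).const_mul (tpow A x))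
  have hcrit := hlocal.hasDerivAt_eq_zero hderiv
  simp only [e, Pi.single_apply, ite_mul, one_mul, zero_mul, sum_ite_eq', mem_univ,
    if_true] at hcrit
  exact mul_left_cancel₀ (Nat.cast_ne_zero.2 hm.ne') (by linear_combination hcrit)

theorem SymT.exists_nonpos_eigenpair (hA : SymT A) {y : Fin n → ℝ} (hy : ∀ j, 0 ≤ y j)
    (hy0 : y ≠ 0) (hAy : tpow A y ≤ 0) :
    ∃ (S : Finset (Fin n)) (lam : ℝ) (v : Fin n → ℝ),
      S.Nonempty ∧ lam ≤ 0 ∧ (∀ i ∈ S, 0 < v i) ∧ (∑ i ∈ S, v i ^ 2 = 1) ∧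
      ∀ i ∈ S, tcontr hm A S v i = lam * v i := by
  obtain ⟨x, hxK, hx⟩ := (isCompact_nonnegUnitSphere n).exists_isMinOn
    ⟨_, inv_sqrt_smul_mem_nonnegUnitSphere hy hy0⟩ (continuous_tpow A).continuousOn
  set S : Finset (Fin n) := {i | 0 < x i}
  have hoff (j : Fin n) (hj : j ∉ S) : x j = 0 :=
    le_antisymm (by simpa [S] using hj) (hxK.1 j)
  have hnorm : ∑ i ∈ S, x i ^ 2 = 1 := by
    rw [← hxK.2]
    exact sum_subset (subset_univ S) fun j _ hj => by simp [hoff j hj]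
  refine ⟨S, tpow A x, x, nonempty_of_sum_ne_zero (hnorm ▸ one_ne_zero), ?_,
    fun i hi => (mem_filter.1 hi).2, hnorm, fun i hi => ?_⟩
  · have hc : 0 < √(∑ j, y j ^ 2) ^ m := pow_pos (Real.sqrt_pos.2 (sum_sq_pos_of_ne_zero hy0)) m
    have := hx.mul_sqrt_pow_le_tpow hy hy0
    by_contra! hpos
    linarith [mul_pos hpos hc]
  · rw [tcontr_eq_tcontr_univ A hm hoff hi,
      hA.tcontr_univ_eq_of_isMinOn hm hxK hx (mem_filter.1 hi).2]

theorem tpow_indicator_eq_of_eigenpair {S : Finset (Fin n)} {lam : ℝ} {v : Fin n → ℝ}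
    (hnorm : ∑ i ∈ S, v i ^ 2 = 1) (heig : ∀ i ∈ S, tcontr hm A S v i = lam * v i) :
    tpow A ((S : Set (Fin n)).indicator v) = lam := by
  rw [tpow_eq_sum_mul_tcontr A hm fun j hj => Set.indicator_of_notMem (by simpa) _]
  calc ∑ i ∈ S, (S : Set (Fin n)).indicator v i * tcontr hm A S ((S : Set (Fin n)).indicator v) i
      = ∑ i ∈ S, lam * v i ^ 2 := sum_congr rfl fun i hi => by
        rw [tcontr_congr A hm (fun j hj => Set.indicator_of_mem (by simpa) _), heig i hi,
          Set.indicator_of_mem (by simpa) _]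
        ring
    _ = lam := by rw [← mul_sum, hnorm, mul_one]

end

theorem stmt9 {m n : ℕ} (hm : 0 < m) (A : (Fin m → Fin n) → ℝ) (hA : SymT A) :
    StrictCoposT A ↔
      ¬ ∃ (S : Finset (Fin n)) (lam : ℝ) (v : Fin n → ℝ),
        S.Nonempty ∧ lam ≤ 0 ∧ (∀ i ∈ S, 0 < v i) ∧ (∑ i ∈ S, v i ^ 2 = 1) ∧
        ∀ i ∈ S, tcontr hm A S v i = lam * v i := by
  constructor
  · rintro hcopos ⟨S, lam, v, ⟨i, hi⟩, hlam, hv, hnorm, heig⟩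
    have hpos := hcopos ((S : Set (Fin n)).indicator v)
      (Set.indicator_nonneg fun j hj => (hv j hj).le)
      (Function.ne_iff.2 ⟨i, by simpa [hi] using (hv i hi).ne'⟩)
    rw [tpow_indicator_eq_of_eigenpair hm hnorm heig] at hpos
    linarith
  · intro hno y hy hy0
    by_contra! hAy
    exact hno (hA.exists_nonpos_eigenpair hm hy hy0 hAy)
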